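/- (Monotonicity lemma) Let β > 0, μ ∈ ℝ, f(a) = (1/a) ln((1+a)/(1−a)) for 0 ≤ a < 1 (f(0)=2), and γ₀(p) = 1/(e^{β(p²−μ)}+1). Suppose γ : ℝ³ → [0,1] and α̂ : ℝ³ → ℂ satisfy, at a point p with p² ≠ μ and (γ(p)−1/2)² + |α̂(p)|² < 1/4, the equation p²−μ = −((2γ(p)−1)/β) f(2√((γ(p)−1/2)² + |α̂(p)|²)). If α̂(p) ≠ 0, then γ(p) < γ₀(p) when p² < μ, and γ(p) > γ₀(p) when p² > μ. -/

import Mathlib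

open Real

/-- `f(a) = (1/a)·ln((1+a)/(1−a))` for `a ∈ (0,1)`, with `f(0) = 2`. -/
noncomputable def fBCS (a : ℝ) : ℝ :=
  if a = 0 then 2 else (1 / a) * Real.log ((1 + a) / (1 - a))

/-- The normal state `γ₀(p) = (e^{β(p²−μ)}+1)^{-1}`. -/
noncomputable def gamma0 (β μ : ℝ) (p : EuclideanSpace ℝ (Fin 3)) : ℝ :=
  1 / (Real.exp (β * (‖p‖ ^ 2 - μ)) + 1)

/-!
Write `t = 2γ(p) − 1` and `a = 2√((γ(p) − 1/2)² + |α̂(p)|²)`; then `|t| < a < 1`, the first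
inequality because `α̂(p) ≠ 0`, and the equation reads `−β(p² − μ) = t f(a)`. Since
`t f(t) = 2 artanh t` and the power series `f(a) = Σ 2a^{2k}/(2k+1)` shows that `f` is even and
strictly increasing in `|a|`, the difference `2 artanh t − t f(a)` has the sign of `p² − μ`.
Finally `2γ₀(p) − 1 = tanh(−β(p² − μ)/2)`, and `artanh` is strictly increasing.
-/

theorem hasSum_fBCS {a : ℝ} (ha : |a| < 1) :
    HasSum (fun k : ℕ => 2 / (2 * k + 1) * a ^ (2 * k)) (fBCS a) := by
  by_cases h0 : a = 0
  · subst h0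
    convert hasSum_ite_eq 0 (2 : ℝ) using 1
    · funext k
      cases k <;> simp
    · simp [fBCS]
  · have h1 : 1 + a ≠ 0 := by linarith [neg_abs_le a]
    have h2 : 1 - a ≠ 0 := by linarith [le_abs_self a]
    rw [fBCS, if_neg h0, log_div h1 h2, one_div]
    refine ((hasSum_log_sub_log_of_abs_lt_one ha).mul_left a⁻¹).congr_fun fun k => ?_
    rw [pow_succ]
    field_simp

theorem two_le_fBCS {a : ℝ} (ha : |a| < 1) : 2 ≤ fBCS a := by
  simpa using le_hasSum (hasSum_fBCS ha) 0 fun k _ =>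
    mul_nonneg (by positivity) ((even_two_mul k).pow_nonneg a)

theorem fBCS_lt_fBCS {a b : ℝ} (hab : |a| < |b|) (hb : |b| < 1) : fBCS a < fBCS b := by
  refine hasSum_lt (i := 1) (fun k => ?_) ?_ (hasSum_fBCS (hab.trans hb)) (hasSum_fBCS hb)
  · simp only [← (even_two_mul k).pow_abs a, ← (even_two_mul k).pow_abs b]
    gcongr
  · simp only [← (even_two_mul 1).pow_abs a, ← (even_two_mul 1).pow_abs b]
    gcongr

theorem two_mul_artanh_eq_mul_fBCS {t : ℝ} (ht : |t| ≤ 1) : 2 * artanh t = t * fBCS t := by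
  rw [artanh_eq_half_log (abs_le.1 ht)]
  by_cases h0 : t = 0
  · simp [h0]
  · rw [fBCS, if_neg h0]
    field_simp

theorem two_mul_artanh_lt_mul_fBCS {t a : ℝ} (hta : |t| < |a|) (ha : |a| < 1) (ht : 0 < t) :
    2 * artanh t < t * fBCS a := by
  rw [two_mul_artanh_eq_mul_fBCS (hta.trans ha).le]
  exact mul_lt_mul_of_pos_left (fBCS_lt_fBCS hta ha) ht

theorem mul_fBCS_lt_two_mul_artanh {t a : ℝ} (hta : |t| < |a|) (ha : |a| < 1) (ht : t < 0) :
    t * fBCS a < 2 * artanh t := by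
  rw [two_mul_artanh_eq_mul_fBCS (hta.trans ha).le]
  exact mul_lt_mul_of_neg_left (fBCS_lt_fBCS hta ha) ht

theorem two_div_exp_add_one_sub_one_mem_Ioo (x : ℝ) : 2 / (exp x + 1) - 1 ∈ Set.Ioo (-1) 1 := by
  have hx := exp_pos x
  constructor
  · have : 0 < 2 / (exp x + 1) := by positivity
    linarith
  · rw [sub_lt_iff_lt_add, div_lt_iff₀ (by positivity)]
    linarith

theorem artanh_two_div_exp_add_one_sub_one (x : ℝ) : artanh (2 / (exp x + 1) - 1) = -x / 2 := by
  have hratio : (1 + (2 / (exp x + 1) - 1)) / (1 - (2 / (exp x + 1) - 1)) = exp (-x) := by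
    rw [exp_neg]
    field_simp
    ring_nf
    field_simp
  rw [artanh, hratio, log_sqrt (exp_pos _).le, log_exp]

theorem two_mul_artanh_lt_neg_iff {t x : ℝ} (ht : t ∈ Set.Ioo (-1) 1) :
    2 * artanh t < -x ↔ t < 2 / (exp x + 1) - 1 := by
  rw [← artanh_lt_artanh_iff ht (two_div_exp_add_one_sub_one_mem_Ioo x),
    artanh_two_div_exp_add_one_sub_one]
  constructor <;> intro h <;> linarith

theorem neg_lt_two_mul_artanh_iff {t x : ℝ} (ht : t ∈ Set.Ioo (-1) 1) :
    -x < 2 * artanh t ↔ 2 / (exp x + 1) - 1 < t := by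
  rw [← artanh_lt_artanh_iff (two_div_exp_add_one_sub_one_mem_Ioo x) ht,
    artanh_two_div_exp_add_one_sub_one]
  constructor <;> intro h <;> linarith

theorem gamma_monotone_general (β μ : ℝ) (hβ : 0 < β)
    (γ : EuclideanSpace ℝ (Fin 3) → ℝ) (αh : EuclideanSpace ℝ (Fin 3) → ℂ)
    (p : EuclideanSpace ℝ (Fin 3))
    (hin : (γ p - 1 / 2) ^ 2 + ‖αh p‖ ^ 2 < 1 / 4)
    (heq : ‖p‖ ^ 2 - μ =
      -((2 * γ p - 1) / β) * fBCS (2 * Real.sqrt ((γ p - 1 / 2) ^ 2 + ‖αh p‖ ^ 2)))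
    (hα : αh p ≠ 0) :
    (‖p‖ ^ 2 < μ → γ p < gamma0 β μ p) ∧ (μ < ‖p‖ ^ 2 → gamma0 β μ p < γ p) := by
  set a := 2 * √((γ p - 1 / 2) ^ 2 + ‖αh p‖ ^ 2) with ha_def
  have ha_sq : a ^ 2 = 4 * ((γ p - 1 / 2) ^ 2 + ‖αh p‖ ^ 2) := by
    rw [ha_def, mul_pow, sq_sqrt (by positivity)]
    norm_num
  have hTa : |2 * γ p - 1| < |a| := sq_lt_sq.1 <| by
    have := norm_pos_iff.2 hα
    nlinarith
  have ha : |a| < 1 := by simpa using sq_lt_sq.1 (show a ^ 2 < 1 ^ 2 by linarith)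
  have hT : 2 * γ p - 1 ∈ Set.Ioo (-1) 1 := abs_lt.1 (hTa.trans ha)
  have hE : -(β * (‖p‖ ^ 2 - μ)) = (2 * γ p - 1) * fBCS a := by
    rw [heq]
    field_simp
  have hf : 0 < fBCS a := by linarith [two_le_fBCS ha]
  have hγ₀ : 2 * gamma0 β μ p - 1 = 2 / (exp (β * (‖p‖ ^ 2 - μ)) + 1) - 1 := by
    rw [gamma0]
    ring
  refine ⟨fun hlt => ?_, fun hgt => ?_⟩
  · have hpos : 0 < (2 * γ p - 1) * fBCS a := by rw [← hE]; nlinarith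
    have key := two_mul_artanh_lt_mul_fBCS hTa ha (pos_of_mul_pos_left hpos hf.le)
    rw [← hE, two_mul_artanh_lt_neg_iff hT] at key
    linarith
  · have hneg : (2 * γ p - 1) * fBCS a < 0 := by rw [← hE]; nlinarith
    have key := mul_fBCS_lt_two_mul_artanh hTa ha (neg_of_mul_neg_left hneg hf.le)
    rw [← hE, neg_lt_two_mul_artanh_iff hT] at key
    linarith

/-- Monotonicity lemma: a solution of the Euler–Lagrange equation for `γ` with
`α̂(p) ≠ 0` satisfies `γ(p) < γ₀(p)` for `p² < μ` and `γ(p) > γ₀(p)` for `p² > μ`. -/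
theorem gamma_monotone (β μ : ℝ) (hβ : 0 < β)
    (γ : EuclideanSpace ℝ (Fin 3) → ℝ) (αh : EuclideanSpace ℝ (Fin 3) → ℂ)
    (p : EuclideanSpace ℝ (Fin 3)) (hp : ‖p‖ ^ 2 ≠ μ)
    (hγ0 : 0 ≤ γ p) (hγ1 : γ p ≤ 1)
    (hin : (γ p - 1 / 2) ^ 2 + ‖αh p‖ ^ 2 < 1 / 4)
    (heq : ‖p‖ ^ 2 - μ =
      -((2 * γ p - 1) / β) * fBCS (2 * Real.sqrt ((γ p - 1 / 2) ^ 2 + ‖αh p‖ ^ 2)))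
    (hα : αh p ≠ 0) :
    (‖p‖ ^ 2 < μ → γ p < gamma0 β μ p) ∧ (μ < ‖p‖ ^ 2 → gamma0 β μ p < γ p) :=
  gamma_monotone_general β μ hβ γ αh p hin heq hα
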